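/- Let σ ∈ ℕ∪{0}, let θ ∈ ℕ⁺, let G be a graph and let X ⊆ V(G) such that there is no (σ,θ)-X-abyss in G. Then G[X] admits a 2^σ-vertex-coloring of G-diameter less than θ. -/

import Mathlib

/-- The induced subgraph of `G` on `S` is nonempty and connected, expressed via
walks of `G` staying inside `S`. -/
def ConnectedIn {V : Type*} (G : SimpleGraph V) (S : Set V) : Prop :=
  S.Nonempty ∧ ∀ a ∈ S, ∀ b ∈ S, ∃ w : G.Walk a b, ∀ v ∈ w.support, v ∈ S

/-- An induced `H`-model in `G`: pairwise disjoint nonempty connected branch sets,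
joined by an edge iff the corresponding vertices of `H` are adjacent. -/
def IsInducedModel {W V : Type*} (H : SimpleGraph W) (G : SimpleGraph V) (X : W → Set V) : Prop :=
  (∀ w, ConnectedIn G (X w)) ∧
  (∀ w w', w ≠ w' → Disjoint (X w) (X w')) ∧
  (∀ w w', H.Adj w w' → ∃ a ∈ X w, ∃ b ∈ X w', G.Adj a b) ∧
  (∀ w w', w ≠ w' → ¬ H.Adj w w' → ∀ a ∈ X w, ∀ b ∈ X w', ¬ G.Adj a b)

/-- `G` has an induced minor isomorphic to `H`. -/
def InducedMinor {W V : Type*} (H : SimpleGraph W) (G : SimpleGraph V) : Prop :=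
  ∃ X : W → Set V, IsInducedModel H G X

/-- An `H`-model in `G` (for the minor relation). -/
def IsMinorModel {W V : Type*} (H : SimpleGraph W) (G : SimpleGraph V) (X : W → Set V) : Prop :=
  (∀ w, ConnectedIn G (X w)) ∧
  (∀ w w', w ≠ w' → Disjoint (X w) (X w')) ∧
  (∀ w w', H.Adj w w' → ∃ a ∈ X w, ∃ b ∈ X w', G.Adj a b)

/-- `G` has a minor isomorphic to `H`. -/
def HasMinor {W V : Type*} (H : SimpleGraph W) (G : SimpleGraph V) : Prop :=
  ∃ X : W → Set V, IsMinorModel H G X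

/-- `(T, β)` is a tree decomposition of `G`. -/
structure IsTreeDecomp {V ι : Type*} (G : SimpleGraph V) (T : SimpleGraph ι)
    (β : ι → Finset V) : Prop where
  tree : T.IsTree
  bags_connected : ∀ v : V, ConnectedIn T {i | v ∈ β i}
  edges_covered : ∀ u v : V, G.Adj u v → ∃ i, u ∈ β i ∧ v ∈ β i

/-- `G` has a tree decomposition of width at most `w`. -/
def TreewidthLE {V : Type*} (G : SimpleGraph V) (w : ℕ) : Prop :=
  ∃ (n : ℕ) (T : SimpleGraph (Fin n)) (β : Fin n → Finset V),
    IsTreeDecomp G T β ∧ ∀ i, (β i).card ≤ w + 1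

noncomputable def treewidth {V : Type*} (G : SimpleGraph V) : ℕ :=
  sInf {w | TreewidthLE G w}

/-- `G` has a path decomposition of width at most `w`. -/
def PathwidthLE {V : Type*} (G : SimpleGraph V) (w : ℕ) : Prop :=
  ∃ (n : ℕ) (β : Fin n → Finset V),
    IsTreeDecomp G (SimpleGraph.pathGraph n) β ∧ ∀ i, (β i).card ≤ w + 1

noncomputable def pathwidth {V : Type*} (G : SimpleGraph V) : ℕ :=
  sInf {w | PathwidthLE G w}

/-- A hereditary class of finite graphs (each finite graph is represented, up to
isomorphism, on some `Fin n`): the class is closed under induced subgraphs,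
i.e. under pulling back along injections. -/
def Hereditary (𝒢 : ∀ n : ℕ, SimpleGraph (Fin n) → Prop) : Prop :=
  ∀ (n m : ℕ) (G : SimpleGraph (Fin n)) (f : Fin m ↪ Fin n),
    𝒢 n G → 𝒢 m (G.comap ⇑f)

/-- A graph `J` is `ζ`-jagged if every induced subgraph with pathwidth at least 3
has at least `ζ` vertices of degree two (in that induced subgraph). -/
def Jagged {V : Type*} (ζ : ℕ) (J : SimpleGraph V) : Prop :=
  ∀ s : Set V, 3 ≤ pathwidth (J.induce s) →
    ζ ≤ {v | v ∈ s ∧ ({w | w ∈ s ∧ J.Adj v w}).ncard = 2}.ncard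

/-- A graph is `d`-degenerate if every nonempty induced subgraph has a vertex of
degree at most `d`. -/
def Degenerate {V : Type*} (d : ℕ) (G : SimpleGraph V) : Prop :=
  ∀ s : Set V, s.Nonempty → ∃ v ∈ s, ({w | w ∈ s ∧ G.Adj v w}).ncard ≤ d

/-- The complete binary tree of radius `ρ`: vertices are binary strings of length
at most `ρ`, and `x` is adjacent to `b :: x` (its children). -/
def binTree (ρ : ℕ) : SimpleGraph {l : List Bool // l.length ≤ ρ} where
  Adj x y := (∃ b : Bool, (x : List Bool) = b :: (y : List Bool)) ∨
             (∃ b : Bool, (y : List Bool) = b :: (x : List Bool))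
  symm := by constructor; rintro x y (h | h); exact Or.inr h; exact Or.inl h
  loopless := by
    constructor
    rintro x (⟨b, hb⟩ | ⟨b, hb⟩) <;>
      · have := congrArg List.length hb
        simp at this

/-- The `n × n` square grid graph. -/
def gridGraph (n : ℕ) : SimpleGraph (Fin n × Fin n) where
  Adj p q := (p.1 = q.1 ∧ ((p.2 : ℕ) + 1 = (q.2 : ℕ) ∨ (q.2 : ℕ) + 1 = (p.2 : ℕ))) ∨
             (p.2 = q.2 ∧ ((p.1 : ℕ) + 1 = (q.1 : ℕ) ∨ (q.1 : ℕ) + 1 = (p.1 : ℕ)))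
  symm := by
    constructor
    rintro p q (⟨h1, h2⟩ | ⟨h1, h2⟩)
    · exact Or.inl ⟨h1.symm, h2.symm⟩
    · exact Or.inr ⟨h1.symm, h2.symm⟩
  loopless := by constructor; rintro p (⟨_, h | h⟩ | ⟨_, h | h⟩) <;> omega

/-- A graph is planar iff it is isomorphic to a minor of some square grid. -/
def IsPlanar {W : Type*} (H : SimpleGraph W) : Prop :=
  ∃ n : ℕ, HasMinor H (gridGraph n)

/-- `S` is the vertex set of an induced path in `G` from `x` to `y`. -/
def IsInducedPathSet {V : Type*} (G : SimpleGraph V) (S : Set V) (x y : V) : Prop :=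
  ∃ p : G.Walk x y, p.IsPath ∧ {v | v ∈ p.support} = S ∧
    ∀ u v : V, u ∈ p.support → v ∈ p.support → G.Adj u v → p.toSubgraph.Adj u v

/-- `G` has a stable strong `(κ, lam)`-block: a stable set `B` of at least `κ`
vertices together with, for each unordered pair of distinct vertices of `B`,
at least `lam` pairwise internally disjoint induced paths joining them, such that
path systems of distinct pairs meet exactly in the shared endpoints. -/
def HasStableStrongBlock {V : Type*} (G : SimpleGraph V) (κ lam : ℕ) : Prop :=
  ∃ (B : Set V) (P : V → V → Fin lam → Set V),
    κ ≤ B.ncard ∧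
    (∀ x ∈ B, ∀ y ∈ B, x ≠ y → ¬ G.Adj x y) ∧
    (∀ x ∈ B, ∀ y ∈ B, x ≠ y →
      (∀ i, IsInducedPathSet G (P x y i) x y) ∧
      (∀ i j, i ≠ j → ∀ v, v ∈ P x y i → v ∈ P x y j → v = x ∨ v = y) ∧
      (∀ i, P x y i = P y x i)) ∧
    (∀ x ∈ B, ∀ y ∈ B, ∀ x' ∈ B, ∀ y' ∈ B, x ≠ y → x' ≠ y' →
      ({x, y} : Set V) ≠ {x', y'} →
      (⋃ i, P x y i) ∩ (⋃ i, P x' y' i) = (({x, y} : Set V) ∩ {x', y'}))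

/-- `G` is `(κ, lam)`-separable: there is no stable strong `(κ, lam)`-block in `G`. -/
def Separable {V : Type*} (G : SimpleGraph V) (κ lam : ℕ) : Prop :=
  ¬ HasStableStrongBlock G κ lam

/-- In the tree `T` rooted at `u`, `w` is a child of `v`. -/
def IsChild {α : Type*} (T : SimpleGraph α) (u v w : α) : Prop :=
  T.Adj v w ∧ T.dist u w = T.dist u v + 1

/-- `(T, u)` is a `(δ, ρ)`-regular rooted tree: `T` is a tree, every vertex is at
distance at most `ρ` from `u`, and every vertex at distance less than `ρ` from `u`
has exactly `δ` children. -/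
def RootedRegular {α : Type*} (T : SimpleGraph α) (u : α) (δ ρ : ℕ) : Prop :=
  T.IsTree ∧ (∀ v, T.dist u v ≤ ρ) ∧
    ∀ v, T.dist u v < ρ → {w | IsChild T u v w}.ncard = δ

/-- The rooted tree induced by `T` on `s`, with root `r`, is a rooted subtree of
`(T, u)`: it is a tree and every child relation in it is a child relation in `(T, u)`. -/
def IsRootedSubtree {α : Type*} (T : SimpleGraph α) (u : α) (s : Set α) (r : ↥s) : Prop :=
  (T.induce s).IsTree ∧
    ∀ v w : ↥s, IsChild (T.induce s) r v w → IsChild T u (↑v) (↑w)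

open Classical in
/-- The `i`-ancestor of `v` in the tree `T` rooted at `u`: the vertex on the unique
`u`–`v` path at distance `i` from `v`. -/
noncomputable def ancestor {α : Type*} (T : SimpleGraph α) (u v : α) (i : ℕ) : α :=
  if h : ∃ w, T.dist u w + i = T.dist u v ∧ T.dist w v = i then h.choose else v

/-- The rooted tree `T` (mapped into `G` by `f`) is path-uniform in `G`. -/
def PathUniform {V β : Type*} (G : SimpleGraph V) (f : β → V) (T : SimpleGraph β)
    (r : β) (ρ : ℕ) : Prop :=
  ∀ v v' : β, T.dist r v = ρ → T.dist r v' = ρ → ∀ i j : ℕ, i ≤ ρ → j ≤ ρ →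
    (G.Adj (f (ancestor T r v i)) (f (ancestor T r v j)) ↔
      G.Adj (f (ancestor T r v' i)) (f (ancestor T r v' j)))

/-- The rooted tree `T` (mapped into `G` by `f`) is path-induced in `G`. -/
def PathInduced {V β : Type*} (G : SimpleGraph V) (f : β → V) (T : SimpleGraph β)
    (r : β) (ρ : ℕ) : Prop :=
  ∀ v : β, T.dist r v = ρ → ∀ i j : ℕ, i ≤ ρ → j ≤ ρ →
    (G.Adj (f (ancestor T r v i)) (f (ancestor T r v j)) ↔ (i + 1 = j ∨ j + 1 = i))

/-- The rooted tree `T` (mapped into `G` by `f`) is branch-induced in `G`: every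
`G`-edge between vertices of `T` that is not a `T`-edge joins a vertex to one of
its ancestors. -/
def BranchInduced {V β : Type*} (G : SimpleGraph V) (f : β → V) (T : SimpleGraph β)
    (r : β) : Prop :=
  ∀ v w : β, G.Adj (f v) (f w) → ¬ T.Adj v w →
    (T.dist r v + T.dist v w = T.dist r w ∨ T.dist r w + T.dist w v = T.dist r v)

/-- `G` has a (not necessarily induced) subgraph isomorphic to `H`. -/
def HasSubgraphIso {W V : Type*} (H : SimpleGraph W) (G : SimpleGraph V) : Prop :=
  ∃ f : W → V, Function.Injective f ∧ ∀ a b, H.Adj a b → G.Adj (f a) (f b)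

/-- The spanning subgraph of `G` consisting of the edges of color `i` under the
edge-coloring `F`. -/
def colorSub {V : Type*} {c : ℕ} (G : SimpleGraph V) (F : V → V → Fin c) (i : Fin c) :
    SimpleGraph V where
  Adj u v := G.Adj u v ∧ F u v = i ∧ F v u = i
  symm := by constructor; rintro u v ⟨h1, h2, h3⟩; exact ⟨h1.symm, h3, h2⟩
  loopless := by constructor; rintro u ⟨h, _, _⟩; exact G.irrefl h

/-- Distance from `a` to `b` within the induced subgraph `G[S]` (via walks of `G`
all of whose vertices lie in `S`). -/
noncomputable def distIn {V : Type*} (G : SimpleGraph V) (S : Set V) (a b : V) : ℕ :=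
  sInf {n | ∃ w : G.Walk a b, w.length = n ∧ ∀ v ∈ w.support, v ∈ S}

/-- `(a 0, …, a (σ+1))` is a `(σ, θ)`-`X`-abyss in `G`. -/
def IsAbyss {V : Type*} (G : SimpleGraph V) (X : Set V) (σ θ : ℕ) (a : ℕ → V) : Prop :=
  ∃ (S : ℕ → Set V) (ρ : ℕ → ℕ),
    S 0 ⊆ X ∧ ConnectedIn G (S 0) ∧ (∀ k ≤ σ + 1, a k ∈ S 0) ∧
    (∀ i < σ,
      S (i + 1) ⊆ {v | v ∈ S i ∧ distIn G (S i) (a i) v = ρ i + 1} ∧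
      ConnectedIn G (S (i + 1)) ∧
      ∀ k, i + 1 ≤ k → k ≤ σ + 1 → a k ∈ S (i + 1)) ∧
    θ ≤ G.dist (a σ) (a (σ + 1))

/-- The torso of a tree decomposition `(T, β)` of `G` at the node `x`. -/
def torso {V ι : Type*} (G : SimpleGraph V) (T : SimpleGraph ι) (β : ι → Finset V)
    (x : ι) : SimpleGraph {v : V // v ∈ β x} where
  Adj u v := u ≠ v ∧ (G.Adj ↑u ↑v ∨ ∃ y, T.Adj x y ∧ ↑u ∈ β y ∧ ↑v ∈ β y)
  symm := by
    constructor
    rintro u v ⟨hne, h | ⟨y, hy, h1, h2⟩⟩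
    · exact ⟨hne.symm, Or.inl h.symm⟩
    · exact ⟨hne.symm, Or.inr ⟨y, hy, h2, h1⟩⟩
  loopless := by constructor; rintro u ⟨hne, _⟩; exact hne rfl

/-- The vertex set of the component of `T - x` containing `y` (denoted `T_{y∖x}`). -/
def compAway {ι : Type*} (T : SimpleGraph ι) (y x : ι) : Set ι :=
  {z | ∃ w : T.Walk y z, x ∉ w.support}

/-- A tree decomposition `(T, β)` of `G` is tight. -/
def Tight {V ι : Type*} (G : SimpleGraph V) (T : SimpleGraph ι) (β : ι → Finset V) : Prop :=
  ∀ x y, T.Adj x y →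
    ∃ v₀ ∈ (⋃ z ∈ compAway T y x, (β z : Set V)) \ (⋃ z ∈ compAway T x y, (β z : Set V)),
      ∀ u : V, u ∈ β x → u ∈ β y →
        ∃ c : V, G.Adj u c ∧ ∃ w : G.Walk v₀ c, ∀ p ∈ w.support,
          p ∈ (⋃ z ∈ compAway T y x, (β z : Set V)) \ (⋃ z ∈ compAway T x y, (β z : Set V))

/-- `G` has a subgraph isomorphic to some subdivision of the complete graph `K_μ`:
equivalently, there are `μ` branch vertices joined by pairwise internally disjoint
paths of nonzero length. -/
def HasKSubdivision {V : Type*} (μ : ℕ) (G : SimpleGraph V) : Prop :=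
  ∃ b : Fin μ → V, Function.Injective b ∧
    ∃ P : ∀ i j : Fin μ, i < j → G.Walk (b i) (b j),
      (∀ i j (h : i < j), (P i j h).IsPath) ∧
      (∀ i j (h : i < j), ∀ m : Fin μ, b m ∈ (P i j h).support → m = i ∨ m = j) ∧
      (∀ i j (h : i < j), ∀ k l (h' : k < l), (i, j) ≠ (k, l) →
        ∀ v : V, v ∈ (P i j h).support → v ∈ (P k l h').support →
          (v = b i ∨ v = b j) ∧ (v = b k ∨ v = b l))

/-!
Induction on `σ`. For `σ = 0`, two vertices of `X` joined inside `X` at distance `≥ θ` already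
form an abyss. For the step, run a breadth-first search from a root `r` in every component `C`
of `G[X]` and colour by the parity of the BFS layer together with a `2^σ`-colouring of each
connected piece `P` of each layer. Adjacent vertices lie in equal or consecutive layers, so a
monochromatic connected set stays inside one piece `P`. If `P` lies in layer `ρ + 1`, a
`(σ, θ)`-`P`-abyss `(a₀, …, a_{σ+1})` extends to the `(σ + 1, θ)`-`X`-abyss `(r, a₀, …, a_{σ+1})`,
so `P` has none and the induction hypothesis applies; layer `0` is the single vertex `r`.
-/

namespace SimpleGraph.Walk

variable {V β : Type*} {G : SimpleGraph V}

theorem apply_eq_of_forall_adj {g : V → β} {x y : V} (w : G.Walk x y)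
    (h : ∀ u ∈ w.support, ∀ v ∈ w.support, G.Adj u v → g u = g v) :
    ∀ v ∈ w.support, g v = g x := by
  induction w with
  | nil => simp
  | @cons x z y hxz q ih =>
    intro v hv
    have hq : ∀ v ∈ q.support, g v = g z :=
      ih fun u hu v hv => h u (by simp [hu]) v (by simp [hv])
    rw [support_cons, List.mem_cons] at hv
    rcases hv with rfl | hv
    · rfl
    · rw [hq v hv, h x (by simp) z (by simp) hxz]

end SimpleGraph.Walk

section

variable {V α β : Type*} {G : SimpleGraph V} {X S : Set V} {θ σ : ℕ}

def IsDiamLTColoring (G : SimpleGraph V) (X : Set V) (θ : ℕ) (f : V → α) : Prop :=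
  ∀ x y : V, (∃ w : G.Walk x y, ∀ v ∈ w.support, v ∈ X ∧ f v = f x) → G.dist x y < θ

theorem IsDiamLTColoring.comp_injective {f : V → α} (hf : IsDiamLTColoring G X θ f)
    {e : α → β} (he : e.Injective) : IsDiamLTColoring G X θ (e ∘ f) := by
  rintro x y ⟨w, hw⟩
  exact hf x y ⟨w, fun v hv => ⟨(hw v hv).1, he (hw v hv).2⟩⟩

/-- The component of `G[X]` containing `v`; empty if `v ∉ X`. -/
def compIn (G : SimpleGraph V) (X : Set V) (v : V) : Set V :=
  {u | ∃ w : G.Walk v u, ∀ z ∈ w.support, z ∈ X}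

theorem compIn_subset (v : V) : compIn G X v ⊆ X := fun _ ⟨w, hw⟩ => hw _ w.end_mem_support

theorem mem_compIn_self {v : V} (hv : v ∈ X) : v ∈ compIn G X v :=
  ⟨.nil, by simpa using hv⟩

theorem mem_compIn_of_walk {v u : V} (w : G.Walk v u) (hw : ∀ z ∈ w.support, z ∈ X) :
    ∀ z ∈ w.support, z ∈ compIn G X v := by
  classical
  exact fun z hz =>
    ⟨w.takeUntil z hz, fun p hp => hw p (w.support_takeUntil_subset_support hz hp)⟩

theorem compIn_eq_of_mem {u v : V} (h : u ∈ compIn G X v) : compIn G X u = compIn G X v := by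
  obtain ⟨w, hw⟩ := h
  ext t
  constructor
  · rintro ⟨w', hw'⟩
    refine ⟨w.append w', fun z hz => ?_⟩
    rcases (w.mem_support_append_iff w').1 hz with hz | hz
    exacts [hw z hz, hw' z hz]
  · rintro ⟨w', hw'⟩
    refine ⟨w.reverse.append w', fun z hz => ?_⟩
    rcases (w.reverse.mem_support_append_iff w').1 hz with hz | hz
    exacts [hw z (by simpa using hz), hw' z hz]

theorem exists_walk_of_mem_compIn {v a b : V} (ha : a ∈ compIn G X v)
    (hb : b ∈ compIn G X v) : ∃ w : G.Walk a b, ∀ z ∈ w.support, z ∈ compIn G X v := by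
  rw [← compIn_eq_of_mem ha] at hb ⊢
  obtain ⟨w, hw⟩ := hb
  exact ⟨w, mem_compIn_of_walk w hw⟩

theorem connectedIn_compIn {v : V} (hv : v ∈ X) : ConnectedIn G (compIn G X v) :=
  ⟨⟨v, mem_compIn_self hv⟩, fun _ ha _ hb => exists_walk_of_mem_compIn ha hb⟩

theorem distIn_le_length {a b : V} (w : G.Walk a b) (hw : ∀ v ∈ w.support, v ∈ S) :
    distIn G S a b ≤ w.length :=
  Nat.sInf_le ⟨w, rfl, hw⟩

theorem exists_walk_length_eq_distIn {a b : V} (w : G.Walk a b) (hw : ∀ v ∈ w.support, v ∈ S) :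
    ∃ w' : G.Walk a b, w'.length = distIn G S a b ∧ ∀ v ∈ w'.support, v ∈ S :=
  Nat.sInf_mem (s := {n | ∃ w : G.Walk a b, w.length = n ∧ ∀ v ∈ w.support, v ∈ S})
    ⟨w.length, w, rfl, hw⟩

theorem eq_of_distIn_eq_zero {a b : V} (w : G.Walk a b) (hw : ∀ v ∈ w.support, v ∈ S)
    (h : distIn G S a b = 0) : a = b := by
  obtain ⟨w', hlen, -⟩ := exists_walk_length_eq_distIn w hw
  exact w'.eq_of_length_eq_zero (hlen.trans h)

theorem distIn_le_distIn_add_one_of_adj {a u v : V} (w : G.Walk a u)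
    (hw : ∀ z ∈ w.support, z ∈ S) (hv : v ∈ S) (huv : G.Adj u v) :
    distIn G S a v ≤ distIn G S a u + 1 := by
  obtain ⟨w', hlen, hw'⟩ := exists_walk_length_eq_distIn w hw
  rw [← hlen, ← w'.length_concat huv]
  refine distIn_le_length _ fun z hz => ?_
  rw [w'.support_concat huv, List.mem_append, List.mem_singleton] at hz
  rcases hz with hz | rfl
  exacts [hw' z hz, hv]

open Classical in
noncomputable def compRoot (G : SimpleGraph V) (X : Set V) (v : V) : V :=
  if h : (compIn G X v).Nonempty then h.some else v

theorem compRoot_mem {v : V} (hv : v ∈ X) : compRoot G X v ∈ compIn G X v := by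
  have hne : (compIn G X v).Nonempty := ⟨v, mem_compIn_self hv⟩
  rw [compRoot, dif_pos hne]
  exact hne.some_mem

theorem compRoot_eq_of_mem {u v : V} (h : u ∈ compIn G X v) :
    compRoot G X u = compRoot G X v := by
  have hne : (compIn G X v).Nonempty := ⟨u, h⟩
  have hne' : (compIn G X u).Nonempty := compIn_eq_of_mem h ▸ hne
  rw [compRoot, compRoot, dif_pos hne, dif_pos hne']
  congr 1
  exact compIn_eq_of_mem h

noncomputable def bfsLayer (G : SimpleGraph V) (X : Set V) (v : V) : ℕ :=
  distIn G (compIn G X v) (compRoot G X v) v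

theorem bfsLayer_eq_of_mem {u v : V} (h : u ∈ compIn G X v) :
    bfsLayer G X u = distIn G (compIn G X v) (compRoot G X v) u := by
  rw [bfsLayer, compIn_eq_of_mem h, compRoot_eq_of_mem h]

theorem eq_compRoot_of_bfsLayer_eq_zero {v : V} (hv : v ∈ X) (h : bfsLayer G X v = 0) :
    v = compRoot G X v := by
  obtain ⟨w, hw⟩ := exists_walk_of_mem_compIn (compRoot_mem hv) (mem_compIn_self hv)
  exact (eq_of_distIn_eq_zero w hw h).symm

theorem bfsLayer_le_add_one_of_adj {u v : V} (hu : u ∈ X) (hv : v ∈ X) (huv : G.Adj u v) :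
    bfsLayer G X v ≤ bfsLayer G X u + 1 := by
  have hvu : v ∈ compIn G X u := ⟨huv.toWalk, by simp [hu, hv]⟩
  obtain ⟨w, hw⟩ := exists_walk_of_mem_compIn (compRoot_mem hu) (mem_compIn_self hu)
  rw [bfsLayer_eq_of_mem hvu]
  exact distIn_le_distIn_add_one_of_adj w hw hvu huv

theorem bfsLayer_eq_of_adj {u v : V} (hu : u ∈ X) (hv : v ∈ X) (huv : G.Adj u v)
    (hparity : Fin.ofNat 2 (bfsLayer G X u) = Fin.ofNat 2 (bfsLayer G X v)) :
    bfsLayer G X u = bfsLayer G X v := by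
  have h₁ := bfsLayer_le_add_one_of_adj hu hv huv
  have h₂ := bfsLayer_le_add_one_of_adj hv hu huv.symm
  have h₃ := congrArg Fin.val hparity
  simp only [Fin.val_ofNat] at h₃
  omega

def layerSet (G : SimpleGraph V) (X : Set V) (v : V) : Set V :=
  {u | u ∈ compIn G X v ∧ bfsLayer G X u = bfsLayer G X v}

def layerPiece (G : SimpleGraph V) (X : Set V) (v : V) : Set V :=
  compIn G (layerSet G X v) v

theorem layerPiece_eq_of_mem {u v : V} (h : u ∈ layerPiece G X v) :
    layerPiece G X u = layerPiece G X v := by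
  obtain ⟨hu, hlayer⟩ := compIn_subset v h
  have : layerSet G X u = layerSet G X v := by
    simp only [layerSet, compIn_eq_of_mem hu, hlayer]
  rw [layerPiece, this, compIn_eq_of_mem h, layerPiece]

theorem IsAbyss.cons {C T : Set V} {r : V} {ρ : ℕ} {a : ℕ → V} (hCX : C ⊆ X)
    (hC : ConnectedIn G C) (hr : r ∈ C) (hT : T ⊆ {v | v ∈ C ∧ distIn G C r v = ρ + 1})
    (ha : IsAbyss G T σ θ a) :
    IsAbyss G X (σ + 1) θ fun | 0 => r | k + 1 => a k := by
  obtain ⟨S, ρs, hS0, hS0c, hmem0, hstep, hdist⟩ := ha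
  refine ⟨fun | 0 => C | i + 1 => S i, fun | 0 => ρ | i + 1 => ρs i,
    hCX, hC, ?_, ?_, hdist⟩
  · rintro (_ | k) hk
    exacts [hr, (hT (hS0 (hmem0 k (by omega)))).1]
  · rintro (_ | i) hi
    · refine ⟨hS0.trans hT, hS0c, ?_⟩
      rintro (_ | k) hk₁ hk₂
      exacts [absurd hk₁ (by omega), hmem0 k (by omega)]
    · obtain ⟨hsub, hconn, hmem⟩ := hstep i (by omega)
      refine ⟨hsub, hconn, ?_⟩
      rintro (_ | k) hk₁ hk₂
      exacts [absurd hk₁ (by omega), hmem k (by omega) (by omega)]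

theorem isDiamLTColoring_of_not_isAbyss_zero (hX : ¬∃ a, IsAbyss G X 0 θ a) (f : V → α) :
    IsDiamLTColoring G X θ f := by
  rintro x y ⟨w, hw⟩
  by_contra! hθ
  have hwX : ∀ v ∈ w.support, v ∈ X := fun v hv => (hw v hv).1
  have hx : x ∈ X := hwX x w.start_mem_support
  exact hX ⟨fun | 0 => x | _ + 1 => y, fun _ => compIn G X x, fun _ => 0, compIn_subset x,
    connectedIn_compIn hx,
    fun | 0, _ => mem_compIn_self hx | _ + 1, _ => mem_compIn_of_walk w hwX y w.end_mem_support,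
    nofun, hθ⟩

theorem not_isAbyss_layerPiece (hX : ¬∃ a, IsAbyss G X (σ + 1) θ a) {x : V} (hx : x ∈ X)
    (hlayer : bfsLayer G X x ≠ 0) : ¬∃ a, IsAbyss G (layerPiece G X x) σ θ a := by
  rintro ⟨a, ha⟩
  refine hX ⟨_, ha.cons (compIn_subset x) (connectedIn_compIn hx) (compRoot_mem hx)
    (ρ := bfsLayer G X x - 1) fun v hv => ?_⟩
  obtain ⟨hvC, hv⟩ := compIn_subset x hv
  refine ⟨hvC, ?_⟩
  rw [← bfsLayer_eq_of_mem hvC]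
  omega

noncomputable def layeredColoring (G : SimpleGraph V) (X : Set V) (col : Set V → V → α)
    (v : V) : Fin 2 × α :=
  (Fin.ofNat 2 (bfsLayer G X v), col (layerPiece G X v) v)

theorem isDiamLTColoring_layeredColoring (hθ : 1 ≤ θ) {col : Set V → V → α}
    (hcol : ∀ S, (¬∃ a, IsAbyss G S σ θ a) → IsDiamLTColoring G S θ (col S))
    (hX : ¬∃ a, IsAbyss G X (σ + 1) θ a) :
    IsDiamLTColoring G X θ (layeredColoring G X col) := by
  rintro x y ⟨w, hw⟩
  simp only [layeredColoring, Prod.ext_iff] at hw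
  have hwX : ∀ v ∈ w.support, v ∈ X := fun v hv => (hw v hv).1
  have hx : x ∈ X := hwX x w.start_mem_support
  have hlayer : ∀ v ∈ w.support, bfsLayer G X v = bfsLayer G X x :=
    w.apply_eq_of_forall_adj fun u hu v hv huv =>
      bfsLayer_eq_of_adj (hwX u hu) (hwX v hv) huv ((hw u hu).2.1.trans (hw v hv).2.1.symm)
  have hpiece : ∀ v ∈ w.support, v ∈ layerPiece G X x :=
    mem_compIn_of_walk w fun v hv => ⟨mem_compIn_of_walk w hwX v hv, hlayer v hv⟩
  by_cases h0 : bfsLayer G X x = 0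
  · have hyx : y = x := by
      have hy := mem_compIn_of_walk w hwX y w.end_mem_support
      rw [eq_compRoot_of_bfsLayer_eq_zero (hwX y w.end_mem_support)
        ((hlayer y w.end_mem_support).trans h0), compRoot_eq_of_mem hy,
        ← eq_compRoot_of_bfsLayer_eq_zero hx h0]
    rw [hyx, SimpleGraph.dist_self]
    omega
  · refine hcol _ (not_isAbyss_layerPiece hX hx h0) x y ⟨w, fun v hv => ⟨hpiece v hv, ?_⟩⟩
    have hcolour := (hw v hv).2.2
    rwa [layerPiece_eq_of_mem (hpiece v hv)] at hcolour

theorem exists_isDiamLTColoring_of_not_isAbyss (hθ : 1 ≤ θ) (σ : ℕ) :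
    ∃ col : Set V → V → Fin (2 ^ σ),
      ∀ X, (¬∃ a, IsAbyss G X σ θ a) → IsDiamLTColoring G X θ (col X) := by
  induction σ with
  | zero => exact ⟨fun _ _ => 0, fun _ hX => isDiamLTColoring_of_not_isAbyss_zero hX _⟩
  | succ σ ih =>
    obtain ⟨col, hcol⟩ := ih
    let e : Fin 2 × Fin (2 ^ σ) ≃ Fin (2 ^ (σ + 1)) :=
      finProdFinEquiv.trans (finCongr (pow_succ' 2 σ).symm)
    exact ⟨fun X => e ∘ layeredColoring G X col, fun X hX =>
      (isDiamLTColoring_layeredColoring hθ hcol hX).comp_injective e.injective⟩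

end

theorem statement15_general {V : Type} (σ : ℕ) (θ : ℕ) (hθ : 1 ≤ θ)
    (G : SimpleGraph V) (X : Set V)
    (habyss : ¬ ∃ a : ℕ → V, IsAbyss G X σ θ a) :
    ∃ f : V → Fin (2 ^ σ), ∀ x y : V, x ∈ X → y ∈ X →
      (∃ w : G.Walk x y, ∀ v ∈ w.support, v ∈ X ∧ f v = f x) →
      G.dist x y < θ := by
  obtain ⟨col, hcol⟩ := exists_isDiamLTColoring_of_not_isAbyss (G := G) hθ σ
  exact ⟨col X, fun x y _ _ => hcol X habyss x y⟩

/-- If there is no `(σ, θ)`-`X`-abyss in `G`, then `G[X]` admits a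
`2^σ`-vertex-coloring of `G`-diameter less than `θ` (two vertices of `X` of the same
color joined by a walk inside their color class of `X` are at `G`-distance less
than `θ`). -/
theorem statement15 {V : Type} [Fintype V] (σ : ℕ) (θ : ℕ) (hθ : 1 ≤ θ)
    (G : SimpleGraph V) (X : Set V)
    (habyss : ¬ ∃ a : ℕ → V, IsAbyss G X σ θ a) :
    ∃ f : V → Fin (2 ^ σ), ∀ x y : V, x ∈ X → y ∈ X →
      (∃ w : G.Walk x y, ∀ v ∈ w.support, v ∈ X ∧ f v = f x) →
      G.dist x y < θ :=
  statement15_general σ θ hθ G X habyss
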